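/- Let V ∈ R^{p×r} have at most s nonzero rows with V ≠ 0, let W ∈ R^{p×r} with W ≠ 0, let s ≤ s' ≤ p, and let W̄ = HT(W, s'). Set X = ‖V‖_F, Y = ‖W‖_F, and Δ = ‖V^T W‖_* (the nuclear norm, i.e., the sum of singular values, of V^T W). Then ‖V^T W‖_* − ‖V^T W̄‖_* ≤ √(s/s') · min( √(X² Y² − Δ²) , ((1 + √(s/s')) / (X Y)) · (X² Y² − Δ²) ). -/

import Mathlib

open MeasureTheory ProbabilityTheory Matrix Real
open scoped Classical

noncomputable section

/-- Frobenius norm of a real matrix. -/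
def frob {m n : ℕ} (M : Matrix (Fin m) (Fin n) ℝ) : ℝ :=
  Real.sqrt (∑ i, ∑ j, (M i j) ^ 2)

/-- Distance between `p × r` matrices modulo right multiplication by an orthogonal matrix:
`dist(U,V) = min_{P ∈ O(r)} ‖U P - V‖_F`. -/
def gdist {p r : ℕ} (U V : Matrix (Fin p) (Fin r) ℝ) : ℝ :=
  sInf {x : ℝ | ∃ P : Matrix (Fin r) (Fin r) ℝ, Pᵀ * P = 1 ∧ x = frob (U * P - V)}

/-- The positive semidefinite square root, as `Matrix.PosSemidef.sqrt` was defined in the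
older Mathlib (removed since). -/
def posSemidefSqrt {m : ℕ} {S : Matrix (Fin m) (Fin m) ℝ} (hS : S.PosSemidef) :
    Matrix (Fin m) (Fin m) ℝ :=
  hS.1.eigenvectorUnitary.1 * diagonal ((↑) ∘ (√·) ∘ hS.1.eigenvalues) *
  (star hS.1.eigenvectorUnitary : Matrix (Fin m) (Fin m) ℝ)

/-- Centered multivariate Gaussian with covariance `S`, as the law of `S^{1/2} z` for a
standard Gaussian vector `z`. -/
def mvGaussian {m : ℕ} (S : Matrix (Fin m) (Fin m) ℝ) : Measure (Fin m → ℝ) :=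
  if h : S.PosSemidef then
    (Measure.pi fun _ : Fin m => gaussianReal 0 1).map fun z => (posSemidefSqrt h).mulVec z
  else 0

/-- Law of `n` i.i.d. samples from `N_m(0, S)`. -/
def iidLaw (n : ℕ) {m : ℕ} (S : Matrix (Fin m) (Fin m) ℝ) : Measure (Fin n → Fin m → ℝ) :=
  Measure.pi fun _ : Fin n => mvGaussian S

def sampleMean {n m : ℕ} (X : Fin n → Fin m → ℝ) (i : Fin m) : ℝ := (∑ t, X t i) / n

/-- Sample covariance matrix. -/
def sampleCov {n m : ℕ} (X : Fin n → Fin m → ℝ) : Matrix (Fin m) (Fin m) ℝ :=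
  Matrix.of fun i j => (∑ t, (X t i - sampleMean X i) * (X t j - sampleMean X j)) / n

/-- Block-diagonal part of a matrix with respect to block labels `β`. -/
def blockPart {m k : ℕ} (β : Fin m → Fin k) (M : Matrix (Fin m) (Fin m) ℝ) :
    Matrix (Fin m) (Fin m) ℝ :=
  Matrix.of fun i j => if β i = β j then M i j else 0

/-- Rows of `M` belonging to block `i`, all other rows zeroed out. -/
def restrictRows {m k c : ℕ} (β : Fin m → Fin k) (i : Fin k) (M : Matrix (Fin m) (Fin c) ℝ) :
    Matrix (Fin m) (Fin c) ℝ :=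
  Matrix.of fun a b => if β a = i then M a b else 0

/-- ℓ₂ norm of row `i` of `M`. -/
def rowNorm {m r : ℕ} (M : Matrix (Fin m) (Fin r) ℝ) (i : Fin m) : ℝ :=
  Real.sqrt (∑ j, (M i j) ^ 2)

/-- Set of indices of nonzero rows. -/
def rowSupport {m r : ℕ} (M : Matrix (Fin m) (Fin r) ℝ) : Set (Fin m) := {i | M i ≠ 0}

/-- `W'` is the hard thresholding of `W` keeping the `k` rows of largest ℓ₂ norm
(ties broken toward smaller indices). -/
def IsHT {m r : ℕ} (W : Matrix (Fin m) (Fin r) ℝ) (k : ℕ) (W' : Matrix (Fin m) (Fin r) ℝ) : Prop :=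
  ∃ C : Finset (Fin m), C.card = min k m ∧ (∀ i ∈ C, W' i = W i) ∧ (∀ i ∉ C, W' i = 0) ∧
    ∀ i ∈ C, ∀ j ∉ C, rowNorm W j < rowNorm W i ∨ (rowNorm W j = rowNorm W i ∧ i < j)

/-- Positive semidefinite square root (junk value `0` if not psd). -/
def psqrt {r : ℕ} (M : Matrix (Fin r) (Fin r) ℝ) : Matrix (Fin r) (Fin r) ℝ :=
  if h : M.PosSemidef then posSemidefSqrt h else 0

/-- Inverse square root. -/
def invSqrt {r : ℕ} (M : Matrix (Fin r) (Fin r) ℝ) : Matrix (Fin r) (Fin r) ℝ := (psqrt M)⁻¹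

/-- Nuclear norm `Tr √(Mᵀ M)`. -/
def nucNorm {a b : ℕ} (M : Matrix (Fin a) (Fin b) ℝ) : ℝ := (psqrt (Mᵀ * M)).trace

/-- Entrywise ℓ₁ norm. -/
def l1Norm {a b : ℕ} (M : Matrix (Fin a) (Fin b) ℝ) : ℝ := ∑ i, ∑ j, |M i j|

/-- Entrywise sup norm. -/
def maxAbs {a b : ℕ} (M : Matrix (Fin a) (Fin b) ℝ) : ℝ := sSup {x : ℝ | ∃ i j, x = |M i j|}

/-- Membership in the Fantope `{X : 0 ⪯ X ⪯ I, Tr X = r}`. -/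
def InFantope {p : ℕ} (r : ℕ) (X : Matrix (Fin p) (Fin p) ℝ) : Prop :=
  X.PosSemidef ∧ (1 - X).PosSemidef ∧ X.trace = (r : ℝ)

/-- `F` minimizes `-⟨Sh, ·⟩ + ρ ‖·‖_1` over symmetric matrices whose conjugation by
`S0h^{1/2}` lies in the Fantope. -/
def IsFantopeMin {p : ℕ} (r : ℕ) (Sh S0h : Matrix (Fin p) (Fin p) ℝ) (ρ : ℝ)
    (F : Matrix (Fin p) (Fin p) ℝ) : Prop :=
  F.IsSymm ∧ InFantope r (psqrt S0h * F * psqrt S0h) ∧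
    ∀ G : Matrix (Fin p) (Fin p) ℝ, G.IsSymm → InFantope r (psqrt S0h * G * psqrt S0h) →
      -(Shᵀ * F).trace + ρ * l1Norm F ≤ -(Shᵀ * G).trace + ρ * l1Norm G

/-- `L` maximizes `⟨Sh, L Lᵀ⟩` subject to `Lᵀ S0h L = I_r` and row support inside `I`. -/
def IsRestrictedMax {p r : ℕ} (Sh S0h : Matrix (Fin p) (Fin p) ℝ) (I : Finset (Fin p))
    (L : Matrix (Fin p) (Fin r) ℝ) : Prop :=
  Lᵀ * S0h * L = 1 ∧ (∀ i ∉ I, L i = 0) ∧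
    ∀ L' : Matrix (Fin p) (Fin r) ℝ, L'ᵀ * S0h * L' = 1 → (∀ i ∉ I, L' i = 0) →
      (Shᵀ * (L' * L'ᵀ)).trace ≤ (Shᵀ * (L * Lᵀ)).trace

/-- Kullback–Leibler divergence `∫ log (dP/dQ) dP`. -/
def klDivR {α : Type*} [MeasurableSpace α] (P Q : Measure α) : ℝ :=
  ∫ x, Real.log (P.rnDeriv Q x).toReal ∂P

/-!
Polar decomposition gives an orthogonal `Q` with `tr(Qᵀ VᵀW) = Δ`; then `G = VQ` has the row
support of `V`, `‖G‖_F = X`, `⟨G, W⟩ = Δ` and, by trace duality, `⟨G, W̄⟩ ≤ ‖VᵀW̄‖_*`. So the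
loss is at most the part of `⟨G, W⟩` carried by the rows `K = supp V \ C` that thresholding
discards (`C` the kept rows). The rows `L = C \ supp V` are kept but invisible to `G`; as every
discarded row is lighter than every kept one and `s' |K| ≤ s |L|`, we get
`‖W_K‖² ≤ (s/s') ‖W_L‖²`. The matrix `Z = Y G - X W` has `‖Z‖² = 2XY(XY - Δ)` and equals `-X W`
on `L`, so Cauchy–Schwarz on `K` bounds `XY ⟨G, W⟩_K` by a quadratic form in `‖Z_K‖` and
`X ‖W_L‖`; its top eigenvalue yields `⟨G, W⟩_K ≤ e (e + √(1 + e²)) (XY - Δ)` with `e = √(s/s')`.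
Both terms of the minimum follow by playing this against the trivial bound `Δ`.
-/

open scoped Finset InnerProductSpace

namespace Matrix

variable {n : Type*} [Fintype n] [DecidableEq n]

theorem PosSemidef.trace_mul_le_trace {H R : Matrix n n ℝ} (hH : H.PosSemidef)
    (hR : R ∈ unitaryGroup n ℝ) : (R * H).trace ≤ H.trace := by
  set U : Matrix n n ℝ := (hH.1.eigenvectorUnitary : Matrix n n ℝ)
  have hUR : star U * R * U ∈ unitaryGroup n ℝ :=
    mul_mem (mul_mem (Unitary.star_mem hH.1.eigenvectorUnitary.2) hR) hH.1.eigenvectorUnitary.2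
  have hspec : (R * H).trace =
      (star U * R * U * diagonal (RCLike.ofReal ∘ hH.1.eigenvalues)).trace := by
    conv_lhs => rw [hH.1.spectral_theorem, Unitary.conjStarAlgAut_apply]
    rw [← Matrix.mul_assoc, ← Matrix.mul_assoc, trace_mul_cycle, Matrix.mul_assoc _ R]
  rw [hspec, hH.1.trace_eq_sum_eigenvalues]
  refine Finset.sum_le_sum fun i _ => ?_
  simp only [diag_apply, mul_diagonal, Function.comp_apply, RCLike.ofReal_real_eq_id, id]
  exact mul_le_of_le_one_left (hH.eigenvalues_nonneg i)
    ((le_abs_self _).trans (entry_norm_bound_of_unitary hUR i i))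

theorem exists_unitary_mul_diagonal_sqrt {C : Matrix n n ℝ} {μ : n → ℝ}
    (hC : Cᵀ * C = diagonal μ) :
    ∃ O ∈ unitaryGroup n ℝ, O * diagonal (fun i => √(μ i)) = C := by
  let col : n → EuclideanSpace ℝ n := fun j => WithLp.toLp 2 (Cᵀ j)
  have hcol : ∀ i j, inner ℝ (col i) (col j) = if i = j then μ i else 0 := by
    intro i j
    rw [EuclideanSpace.inner_eq_star_dotProduct, star_trivial, dotProduct_comm, ← diagonal_apply,
      ← hC]
    rfl
  have hμ : ∀ i, 0 ≤ μ i := fun i => by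
    have := real_inner_self_nonneg (x := col i)
    rwa [hcol, if_pos rfl] at this
  have hon : Orthonormal ℝ ({i | μ i ≠ 0}.domRestrict fun i => (√(μ i))⁻¹ • col i) := by
    rw [orthonormal_iff_ite]
    rintro ⟨i, hi⟩ ⟨j, hj⟩
    simp only [Set.domRestrict_apply, inner_smul_left, inner_smul_right, hcol, Subtype.mk.injEq,
      conj_trivial]
    split_ifs with hij
    · subst hij
      rw [← mul_assoc, ← mul_inv, Real.mul_self_sqrt (hμ i), inv_mul_cancel₀ hi]
    · simp
  obtain ⟨b, hb⟩ := hon.exists_orthonormalBasis_extension_of_card_eq (by simp)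
  refine ⟨(EuclideanSpace.basisFun n ℝ).toBasis.toMatrix b,
    (EuclideanSpace.basisFun n ℝ).toMatrix_orthonormalBasis_mem_unitary b, ?_⟩
  ext k j
  rw [mul_diagonal, Module.Basis.toMatrix_apply, OrthonormalBasis.coe_toBasis_repr_apply,
    EuclideanSpace.basisFun_repr]
  by_cases hj : μ j = 0
  · have : col j = 0 := inner_self_eq_zero.1 ((hcol j j).trans (by rw [if_pos rfl, hj]))
    have hCkj : C k j = 0 := congrArg (fun v : EuclideanSpace ℝ n => v k) this
    rw [hj, Real.sqrt_zero, mul_zero, hCkj]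
  · have : √(μ j) ≠ 0 := Real.sqrt_ne_zero'.2 ((hμ j).lt_of_ne' hj)
    rw [hb j hj, PiLp.smul_apply, smul_eq_mul, mul_right_comm, inv_mul_cancel₀ this, one_mul]
    rfl

end Matrix

theorem psqrt_eq_posSemidefSqrt {m : ℕ} {S : Matrix (Fin m) (Fin m) ℝ} (hS : S.PosSemidef) :
    psqrt S = posSemidefSqrt hS :=
  dif_pos hS

theorem posSemidef_psqrt {m : ℕ} (S : Matrix (Fin m) (Fin m) ℝ) : (psqrt S).PosSemidef := by
  by_cases hS : S.PosSemidef
  · rw [psqrt_eq_posSemidefSqrt hS, posSemidefSqrt]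
    exact (posSemidef_diagonal_iff.2 fun i => Real.sqrt_nonneg _).mul_mul_conjTranspose_same _
  · rw [psqrt, dif_neg hS]
    exact PosSemidef.zero

theorem exists_unitary_mul_psqrt {r : ℕ} (A : Matrix (Fin r) (Fin r) ℝ) :
    ∃ U ∈ unitaryGroup (Fin r) ℝ, U * psqrt (Aᵀ * A) = A := by
  have hS : (Aᵀ * A).PosSemidef := by
    simpa [conjTranspose_eq_transpose_of_trivial] using posSemidef_conjTranspose_mul_self A
  set P : Matrix (Fin r) (Fin r) ℝ := (hS.1.eigenvectorUnitary : Matrix (Fin r) (Fin r) ℝ)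
  have hPt : star P = Pᵀ := conjTranspose_eq_transpose_of_trivial P
  have hdiag : (A * P)ᵀ * (A * P) = diagonal hS.1.eigenvalues := by
    have := hS.1.conjStarAlgAut_star_eigenvectorUnitary
    rw [Unitary.conjStarAlgAut_apply, Unitary.coe_star, star_star, hPt] at this
    rw [transpose_mul, Matrix.mul_assoc, ← Matrix.mul_assoc Aᵀ, ← Matrix.mul_assoc, this]
    rfl
  obtain ⟨O, hO, hOA⟩ := exists_unitary_mul_diagonal_sqrt hdiag
  refine ⟨O * star P, mul_mem hO (Unitary.star_mem hS.1.eigenvectorUnitary.2), ?_⟩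
  rw [psqrt_eq_posSemidefSqrt hS]
  change O * star P * (P * diagonal (fun i => √(hS.1.eigenvalues i)) * star P) = A
  rw [Matrix.mul_assoc O, ← Matrix.mul_assoc (star P), ← Matrix.mul_assoc (star P),
    Unitary.coe_star_mul_self, Matrix.one_mul, ← Matrix.mul_assoc, hOA, Matrix.mul_assoc,
    Unitary.mul_star_self_of_mem hS.1.eigenvectorUnitary.2, Matrix.mul_one]

theorem nucNorm_nonneg {a b : ℕ} (M : Matrix (Fin a) (Fin b) ℝ) : 0 ≤ nucNorm M :=
  (posSemidef_psqrt _).trace_nonneg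

theorem trace_transpose_mul_le_nucNorm {r : ℕ} {Q : Matrix (Fin r) (Fin r) ℝ}
    (hQ : Q ∈ unitaryGroup (Fin r) ℝ) (A : Matrix (Fin r) (Fin r) ℝ) :
    (Qᵀ * A).trace ≤ nucNorm A := by
  obtain ⟨U, hU, hUA⟩ := exists_unitary_mul_psqrt A
  calc (Qᵀ * A).trace = (Qᵀ * U * psqrt (Aᵀ * A)).trace := by rw [Matrix.mul_assoc, hUA]
    _ ≤ nucNorm A :=
      (posSemidef_psqrt _).trace_mul_le_trace (mul_mem (transpose_mem_unitaryGroup_iff.2 hQ) hU)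

theorem exists_trace_transpose_mul_eq_nucNorm {r : ℕ} (A : Matrix (Fin r) (Fin r) ℝ) :
    ∃ Q ∈ unitaryGroup (Fin r) ℝ, (Qᵀ * A).trace = nucNorm A := by
  obtain ⟨U, hU, hUA⟩ := exists_unitary_mul_psqrt A
  refine ⟨U, hU, ?_⟩
  conv_lhs => rw [← hUA, ← Matrix.mul_assoc, ← conjTranspose_eq_transpose_of_trivial]
  rw [← star_eq_conjTranspose, Unitary.star_mul_self_of_mem hU, Matrix.one_mul, nucNorm]

-- A matrix as the ℓ²-family of its rows, so that Frobenius norms and row-restricted sums live in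
-- one inner product space.
def rowsEuclidean {m n : ℕ} (M : Matrix (Fin m) (Fin n) ℝ) :
    PiLp 2 fun _ : Fin m => EuclideanSpace ℝ (Fin n) :=
  WithLp.toLp 2 fun i => WithLp.toLp 2 (M i)

section Frobenius

variable {m n : ℕ}

@[simp]
theorem rowsEuclidean_apply (M : Matrix (Fin m) (Fin n) ℝ) (i : Fin m) :
    (rowsEuclidean M).ofLp i = WithLp.toLp 2 (M i) :=
  rfl

theorem norm_rowsEuclidean_apply (M : Matrix (Fin m) (Fin n) ℝ) (i : Fin m) :
    ‖(rowsEuclidean M).ofLp i‖ = rowNorm M i := by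
  rw [rowsEuclidean_apply, EuclideanSpace.norm_eq, rowNorm]
  simp_rw [Real.norm_eq_abs, sq_abs]

theorem norm_rowsEuclidean (M : Matrix (Fin m) (Fin n) ℝ) : ‖rowsEuclidean M‖ = frob M := by
  rw [PiLp.norm_eq_of_L2, frob]
  congr 1
  refine Finset.sum_congr rfl fun i _ => ?_
  rw [norm_rowsEuclidean_apply, rowNorm, Real.sq_sqrt (Finset.sum_nonneg fun _ _ => sq_nonneg _)]

theorem inner_rowsEuclidean (X Y : Matrix (Fin m) (Fin n) ℝ) :
    ⟪rowsEuclidean X, rowsEuclidean Y⟫_ℝ = (Xᵀ * Y).trace := by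
  rw [PiLp.inner_apply, trace]
  simp only [diag_apply, mul_apply, transpose_apply]
  rw [Finset.sum_comm]
  refine Finset.sum_congr rfl fun i _ => ?_
  rw [rowsEuclidean_apply, rowsEuclidean_apply, EuclideanSpace.inner_toLp_toLp, star_trivial,
    dotProduct]
  simp_rw [mul_comm]

theorem frob_eq_sqrt_trace (M : Matrix (Fin m) (Fin n) ℝ) : frob M = √((Mᵀ * M).trace) := by
  rw [← norm_rowsEuclidean, ← inner_rowsEuclidean, norm_eq_sqrt_real_inner]

theorem frob_mul_unitary (M : Matrix (Fin m) (Fin n) ℝ) {Q : Matrix (Fin n) (Fin n) ℝ}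
    (hQ : Q ∈ unitaryGroup (Fin n) ℝ) : frob (M * Q) = frob M := by
  rw [frob_eq_sqrt_trace, frob_eq_sqrt_trace, transpose_mul, Matrix.mul_assoc, trace_mul_comm,
    Matrix.mul_assoc, Matrix.mul_assoc M, (mem_orthogonalGroup_iff _ _).1 hQ, Matrix.mul_one]

theorem trace_transpose_mul_le_frob_mul_frob (X Y : Matrix (Fin m) (Fin n) ℝ) :
    (Xᵀ * Y).trace ≤ frob X * frob Y := by
  rw [← inner_rowsEuclidean, ← norm_rowsEuclidean, ← norm_rowsEuclidean]
  exact real_inner_le_norm _ _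

theorem exists_dual_certificate (V W : Matrix (Fin m) (Fin n) ℝ) :
    ∃ G : Matrix (Fin m) (Fin n) ℝ, frob G = frob V ∧ (∀ i, V i = 0 → G i = 0) ∧
      (Gᵀ * W).trace = nucNorm (Vᵀ * W) ∧
      ∀ W' : Matrix (Fin m) (Fin n) ℝ, (Gᵀ * W').trace ≤ nucNorm (Vᵀ * W') := by
  obtain ⟨Q, hQ, hQW⟩ := exists_trace_transpose_mul_eq_nucNorm (Vᵀ * W)
  refine ⟨V * Q, frob_mul_unitary V hQ, fun i hi => ?_, ?_, fun W' => ?_⟩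
  · ext j
    simp [mul_apply, hi]
  · rw [transpose_mul, Matrix.mul_assoc, hQW]
  · rw [transpose_mul, Matrix.mul_assoc]
    exact trace_transpose_mul_le_nucNorm hQ _

end Frobenius

section Thresholding

variable {ι : Type*}

theorem card_mul_sum_le_card_mul_sum (f : ι → ℝ) {A B : Finset ι}
    (h : ∀ a ∈ A, ∀ b ∈ B, f a ≤ f b) : (#B : ℝ) * ∑ a ∈ A, f a ≤ #A * ∑ b ∈ B, f b := by
  rw [mul_comm, Finset.sum_mul, Finset.mul_sum]
  calc ∑ a ∈ A, f a * #B = ∑ a ∈ A, ∑ _b ∈ B, f a := by simp [mul_comm]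
    _ ≤ ∑ a ∈ A, ∑ b ∈ B, f b :=
      Finset.sum_le_sum fun a ha => Finset.sum_le_sum fun b hb => h a ha b hb
    _ = ∑ b ∈ B, #A * f b := by rw [Finset.sum_comm]; simp [mul_comm]

theorem sum_sdiff_le_div_card_mul_sum_sdiff [DecidableEq ι] (f : ι → ℝ) (hf : ∀ i, 0 ≤ f i)
    {S C : Finset ι} {s : ℕ} (hfC : ∀ i ∈ C, ∀ j ∉ C, f j ≤ f i) (hS : #S ≤ s) (hsC : s ≤ #C) :
    ∑ i ∈ S \ C, f i ≤ s / #C * ∑ i ∈ C \ S, f i := by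
  rcases (#C).eq_zero_or_pos with hC | hC
  · rw [Finset.card_eq_zero.1 (Nat.le_zero.1 (hS.trans (hsC.trans hC.le)))]
    simp [hC]
  have hK := Finset.card_sdiff_add_card_inter S C
  have hL := Finset.card_sdiff_add_card_inter C S
  rw [Finset.inter_comm] at hL
  have hkl : #(S \ C) ≤ #(C \ S) := by omega
  have hcount : (#C : ℝ) * #(S \ C) ≤ #(C \ S) * s := by
    norm_cast
    nlinarith
  have hcross := card_mul_sum_le_card_mul_sum f (A := S \ C) (B := C \ S)
    fun a ha b hb => hfC b (Finset.mem_sdiff.1 hb).1 a (Finset.mem_sdiff.1 ha).2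
  have hL0 : 0 ≤ ∑ i ∈ C \ S, f i := Finset.sum_nonneg fun i _ => hf i
  rw [div_mul_eq_mul_div, le_div_iff₀ (by exact_mod_cast hC)]
  rcases (#(C \ S)).eq_zero_or_pos with hl | hl
  · rw [Finset.card_eq_zero.1 (Nat.le_zero.1 (hkl.trans hl.le))]
    simpa using mul_nonneg (Nat.cast_nonneg s) hL0
  · refine le_of_mul_le_mul_left ?_ (show (0 : ℝ) < #(C \ S) by exact_mod_cast hl)
    calc (#(C \ S) : ℝ) * ((∑ i ∈ S \ C, f i) * #C) =
          #C * (#(C \ S) * ∑ i ∈ S \ C, f i) := by ring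
      _ ≤ #C * (#(S \ C) * ∑ i ∈ C \ S, f i) := by gcongr
      _ ≤ #(C \ S) * s * ∑ i ∈ C \ S, f i := by rw [← mul_assoc]; gcongr
      _ = _ := by ring

end Thresholding

theorem sum_sdiff_norm_rowsEuclidean_sq_le {m n : ℕ} (W : Matrix (Fin m) (Fin n) ℝ)
    {S C : Finset (Fin m)} {s : ℕ} (hC : ∀ i ∈ C, ∀ j ∉ C, rowNorm W j ≤ rowNorm W i)
    (hS : #S ≤ s) (hsC : s ≤ #C) :
    ∑ i ∈ S \ C, ‖(rowsEuclidean W).ofLp i‖ ^ 2 ≤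
      s / #C * ∑ i ∈ C \ S, ‖(rowsEuclidean W).ofLp i‖ ^ 2 := by
  refine sum_sdiff_le_div_card_mul_sum_sdiff _ (fun _ => sq_nonneg _) (fun i hi j hj => ?_) hS hsC
  rw [norm_rowsEuclidean_apply, norm_rowsEuclidean_apply]
  exact pow_le_pow_left₀ (Real.sqrt_nonneg _) (hC i hi j hj) 2

section Scalar

variable {d t e P : ℝ}

theorem one_le_sqrt_one_add_sq (e : ℝ) : 1 ≤ √(1 + e ^ 2) := by
  rw [one_le_sqrt]
  nlinarith [sq_nonneg e]

-- `e (e + √(1 + e²)) / 2` is the largest eigenvalue of the quadratic form `e a b + e² b²`.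
theorem mul_mul_add_sq_mul_sq_le (he : 0 ≤ e) (a b : ℝ) :
    e * a * b + e ^ 2 * b ^ 2 ≤ e * (e + √(1 + e ^ 2)) / 2 * (a ^ 2 + b ^ 2) := by
  have hw : √(1 + e ^ 2) ^ 2 = 1 + e ^ 2 := sq_sqrt (by positivity)
  have hw1 := one_le_sqrt_one_add_sq e
  have key : 2 * (e + √(1 + e ^ 2)) *
      (e * (e + √(1 + e ^ 2)) / 2 * (a ^ 2 + b ^ 2) - (e * a * b + e ^ 2 * b ^ 2)) =
      e * ((e + √(1 + e ^ 2)) * a - b) ^ 2 := by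
    linear_combination e * b ^ 2 * hw
  have : 0 ≤ e * ((e + √(1 + e ^ 2)) * a - b) ^ 2 := by positivity
  nlinarith

theorem le_mul_sqrt_sq_sub_sq (hd : 0 ≤ d) (hdP : d ≤ P) (he : 0 ≤ e) (htd : t ≤ d)
    (ht : t ≤ e * (e + √(1 + e ^ 2)) * (P - d)) : t ≤ e * √(P ^ 2 - d ^ 2) := by
  set w := √(1 + e ^ 2)
  have hw : w ^ 2 = 1 + e ^ 2 := sq_sqrt (by positivity)
  have hw1 : 1 ≤ w := one_le_sqrt_one_add_sq e
  have hsqrt : e * √(P ^ 2 - d ^ 2) = √(e ^ 2 * (P ^ 2 - d ^ 2)) := by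
    rw [sqrt_mul (sq_nonneg e), sqrt_sq he]
  -- the bounds `t ≤ d` and `t ≤ e (e + w) (P - d)` cross at `w d = e P`
  rcases le_total (w * d) (e * P) with h | h
  · have : (w * d) ^ 2 ≤ (e * P) ^ 2 := pow_le_pow_left₀ (by positivity) h 2
    calc t ≤ d := htd
      _ = √(d ^ 2) := (sqrt_sq hd).symm
      _ ≤ e * √(P ^ 2 - d ^ 2) := by rw [hsqrt]; exact sqrt_le_sqrt (by nlinarith)
  · have hlin : (e + w) ^ 2 * (P - d) ≤ P + d := by nlinarith
    have hpos : 0 ≤ (e + w) * (P - d) := by nlinarith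
    calc t ≤ e * ((e + w) * (P - d)) := by linarith
      _ = e * √(((e + w) * (P - d)) ^ 2) := by rw [sqrt_sq hpos]
      _ ≤ e * √(P ^ 2 - d ^ 2) := by
        gcongr
        nlinarith [mul_le_mul_of_nonneg_left hlin (by linarith : (0:ℝ) ≤ P - d)]

theorem le_mul_div_mul_sq_sub_sq (hd : 0 ≤ d) (hdP : d ≤ P) (he : 0 ≤ e) (htd : t ≤ d)
    (ht : t ≤ e * (1 + 2 * e) * (P - d)) : t ≤ e * ((1 + e) / P * (P ^ 2 - d ^ 2)) := by
  rcases (hd.trans hdP).eq_or_lt with hP | hP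
  · subst hP
    have : d = 0 := le_antisymm hdP hd
    subst this
    simpa using htd
  rw [div_mul_eq_mul_div, mul_div_assoc', le_div_iff₀ hP]
  rcases le_total (e * P) ((1 + e) * d) with h | h
  · have : (1 + 2 * e) * P ≤ (1 + e) * (P + d) := by linarith
    calc t * P ≤ e * (1 + 2 * e) * (P - d) * P := by gcongr
      _ = e * (P - d) * ((1 + 2 * e) * P) := by ring
      _ ≤ e * (P - d) * ((1 + e) * (P + d)) := by gcongr
      _ = _ := by ring
  · have h1 : P ≤ (1 + e) * (P - d) := by linarith
    calc t * P ≤ d * P := by gcongr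
      _ ≤ e * (P + d) * P := by gcongr; nlinarith
      _ = e * P * (P + d) := by ring
      _ ≤ e * ((1 + e) * (P - d)) * (P + d) := by gcongr
      _ = _ := by ring

theorem le_mul_min_of_le_mul_sub (hd : 0 ≤ d) (hdP : d ≤ P) (he : 0 ≤ e) (htd : t ≤ d)
    (ht : t ≤ e * (e + √(1 + e ^ 2)) * (P - d)) :
    t ≤ e * min √(P ^ 2 - d ^ 2) ((1 + e) / P * (P ^ 2 - d ^ 2)) := by
  have hw : √(1 + e ^ 2) ≤ 1 + e := by
    rw [sqrt_le_left (by linarith)]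
    nlinarith
  rw [mul_min_of_nonneg _ _ he]
  refine le_min (le_mul_sqrt_sq_sub_sq hd hdP he htd ht) (le_mul_div_mul_sq_sub_sq hd hdP he htd ?_)
  exact ht.trans (mul_le_mul_of_nonneg_right (mul_le_mul_of_nonneg_left (by linarith) he)
    (by linarith))

end Scalar

section RowFamilies

variable {ι E : Type*} [NormedAddCommGroup E] [InnerProductSpace ℝ E]

theorem norm_smul_sub_smul_sq (u v : E) :
    ‖‖v‖ • u - ‖u‖ • v‖ ^ 2 = 2 * ‖u‖ * ‖v‖ * (‖u‖ * ‖v‖ - ⟪u, v⟫_ℝ) := by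
  rw [norm_sub_sq_real, norm_smul, norm_smul, real_inner_smul_left, real_inner_smul_right,
    norm_norm, norm_norm]
  ring

theorem sum_inner_le_sqrt_mul_sqrt (K : Finset ι) (a b : ι → E) :
    ∑ i ∈ K, ⟪a i, b i⟫_ℝ ≤ √(∑ i ∈ K, ‖a i‖ ^ 2) * √(∑ i ∈ K, ‖b i‖ ^ 2) :=
  (Finset.sum_le_sum fun _ _ => real_inner_le_norm _ _).trans (sum_mul_le_sqrt_mul_sqrt _ _ _)

variable [Fintype ι] [DecidableEq ι]

theorem inner_sub_inner_eq_sum_sdiff {u v w : PiLp 2 fun _ : ι => E} {S C : Finset ι}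
    (hu : ∀ i ∉ S, u i = 0) (hwC : ∀ i ∈ C, w i = v i) (hw : ∀ i ∉ C, w i = 0) :
    ⟪u, v⟫_ℝ - ⟪u, w⟫_ℝ = ∑ i ∈ S \ C, ⟪u i, v i⟫_ℝ := by
  rw [PiLp.inner_apply, PiLp.inner_apply, ← Finset.sum_sub_distrib]
  symm
  refine Finset.sum_subset_zero_on_sdiff (Finset.subset_univ _) ?_ ?_
  · intro i hi
    rw [Finset.mem_sdiff, Finset.mem_sdiff, not_and_not_right] at hi
    by_cases hiC : i ∈ C
    · rw [hwC i hiC, sub_self]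
    · rw [hu i fun hiS => hiC (hi.2 hiS), inner_zero_left, inner_zero_left, sub_self]
  · intro i hi
    rw [hw i (Finset.mem_sdiff.1 hi).2, inner_zero_right, sub_zero]

theorem sum_inner_le_of_sum_norm_sq_le_of_pos {u v : PiLp 2 fun _ : ι => E} {K L : Finset ι}
    (hKL : Disjoint K L) (hu : ∀ i ∈ L, u i = 0) {e : ℝ} (he : 0 ≤ e)
    (hv : ∑ i ∈ K, ‖v i‖ ^ 2 ≤ e ^ 2 * ∑ i ∈ L, ‖v i‖ ^ 2) (hx : 0 < ‖u‖) (hy : 0 < ‖v‖) :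
    ∑ i ∈ K, ⟪u i, v i⟫_ℝ ≤ e * (e + √(1 + e ^ 2)) * (‖u‖ * ‖v‖ - ⟪u, v⟫_ℝ) := by
  set x := ‖u‖
  set y := ‖v‖
  set Z := y • u - x • v
  have hZi : ∀ i, Z i = y • u i - x • v i := fun i => rfl
  have hsplit : ∑ i ∈ K, ‖Z i‖ ^ 2 + ∑ i ∈ L, ‖Z i‖ ^ 2 ≤ ‖Z‖ ^ 2 := by
    rw [← Finset.sum_union hKL, PiLp.norm_sq_eq_of_L2]
    exact Finset.sum_le_sum_of_subset_of_nonneg (Finset.subset_univ _) fun i _ _ => by positivity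
  have hZL : ∑ i ∈ L, ‖Z i‖ ^ 2 = x ^ 2 * ∑ i ∈ L, ‖v i‖ ^ 2 := by
    rw [Finset.mul_sum]
    refine Finset.sum_congr rfl fun i hi => ?_
    rw [hZi, hu i hi, smul_zero, zero_sub, norm_neg, norm_smul, Real.norm_of_nonneg hx.le, mul_pow]
  have hK : y * ∑ i ∈ K, ⟪u i, v i⟫_ℝ = ∑ i ∈ K, ⟪Z i, v i⟫_ℝ + x * ∑ i ∈ K, ‖v i‖ ^ 2 := by
    rw [Finset.mul_sum, Finset.mul_sum, ← Finset.sum_add_distrib]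
    refine Finset.sum_congr rfl fun i _ => ?_
    rw [hZi, inner_sub_left, real_inner_smul_left, real_inner_smul_left, real_inner_self_eq_norm_sq]
    ring
  set a := √(∑ i ∈ K, ‖Z i‖ ^ 2)
  set g := √(∑ i ∈ K, ‖v i‖ ^ 2)
  set b := √(∑ i ∈ L, ‖v i‖ ^ 2)
  have hgb : g ≤ e * b := by
    rw [← sqrt_sq he, ← sqrt_mul (sq_nonneg e)]
    exact sqrt_le_sqrt hv
  have key : x * y * ∑ i ∈ K, ⟪u i, v i⟫_ℝ ≤
      x * y * (e * (e + √(1 + e ^ 2)) * (x * y - ⟪u, v⟫_ℝ)) := by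
    calc x * y * ∑ i ∈ K, ⟪u i, v i⟫_ℝ = x * (∑ i ∈ K, ⟪Z i, v i⟫_ℝ + x * g ^ 2) := by
          rw [mul_assoc, hK, sq_sqrt (by positivity)]
      _ ≤ x * (a * g + x * g ^ 2) := by gcongr; exact sum_inner_le_sqrt_mul_sqrt _ _ _
      _ ≤ e * a * (x * b) + e ^ 2 * (x * b) ^ 2 := by
          have : g ^ 2 ≤ (e * b) ^ 2 := pow_le_pow_left₀ (sqrt_nonneg _) hgb 2
          have ha : 0 ≤ a := sqrt_nonneg _
          nlinarith [mul_le_mul_of_nonneg_left hgb (mul_nonneg hx.le ha)]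
      _ ≤ e * (e + √(1 + e ^ 2)) / 2 * (a ^ 2 + (x * b) ^ 2) := mul_mul_add_sq_mul_sq_le he _ _
      _ ≤ e * (e + √(1 + e ^ 2)) / 2 * ‖Z‖ ^ 2 := by
          gcongr
          rw [sq_sqrt (by positivity), mul_pow, sq_sqrt (by positivity), ← hZL]
          exact hsplit
      _ = _ := by rw [norm_smul_sub_smul_sq]; ring
  exact le_of_mul_le_mul_left key (mul_pos hx hy)

theorem sum_inner_le_of_sum_norm_sq_le {u v : PiLp 2 fun _ : ι => E} {K L : Finset ι}
    (hKL : Disjoint K L) (hu : ∀ i ∈ L, u i = 0) {e : ℝ} (he : 0 ≤ e)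
    (hv : ∑ i ∈ K, ‖v i‖ ^ 2 ≤ e ^ 2 * ∑ i ∈ L, ‖v i‖ ^ 2) :
    ∑ i ∈ K, ⟪u i, v i⟫_ℝ ≤ e * (e + √(1 + e ^ 2)) * (‖u‖ * ‖v‖ - ⟪u, v⟫_ℝ) := by
  rcases (norm_nonneg u).eq_or_lt with hx | hx
  · simp [norm_eq_zero.1 hx.symm]
  rcases (norm_nonneg v).eq_or_lt with hy | hy
  · simp [norm_eq_zero.1 hy.symm]
  exact sum_inner_le_of_sum_norm_sq_le_of_pos hKL hu he hv hx hy

end RowFamilies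

theorem statement16_general
    (p r s s' : ℕ) (hss' : s ≤ s') (hs'p : s' ≤ p)
    (V W Wb : Matrix (Fin p) (Fin r) ℝ)
    (hVs : (rowSupport V).ncard ≤ s)
    (hWb : IsHT W s' Wb) :
    nucNorm (Vᵀ * W) - nucNorm (Vᵀ * Wb) ≤
      Real.sqrt ((s : ℝ) / s') *
        min (Real.sqrt (frob V ^ 2 * frob W ^ 2 - nucNorm (Vᵀ * W) ^ 2))
          ((1 + Real.sqrt ((s : ℝ) / s')) / (frob V * frob W) *
            (frob V ^ 2 * frob W ^ 2 - nucNorm (Vᵀ * W) ^ 2)) := by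
  obtain ⟨C, hC, hCW, hC0, hCmax⟩ := hWb
  obtain ⟨G, hGV, hGS, hGW, hGle⟩ := exists_dual_certificate V W
  have hCs' : #C = s' := by rw [hC, min_eq_left hs'p]
  set S := (rowSupport V).toFinset
  have hS : #S ≤ s := by rwa [Set.ncard_eq_toFinset_card'] at hVs
  have hGS' : ∀ i ∉ S, (rowsEuclidean G).ofLp i = 0 := fun i hi => by
    rw [rowsEuclidean_apply, hGS i (not_not.1 fun h => hi (Set.mem_toFinset.2 h)),
      WithLp.toLp_zero]
  have hloss : nucNorm (Vᵀ * W) - nucNorm (Vᵀ * Wb) ≤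
      ∑ i ∈ S \ C, ⟪(rowsEuclidean G).ofLp i, (rowsEuclidean W).ofLp i⟫_ℝ := by
    rw [← inner_sub_inner_eq_sum_sdiff (w := rowsEuclidean Wb) hGS'
      (fun i hi => by rw [rowsEuclidean_apply, rowsEuclidean_apply, hCW i hi])
      (fun i hi => by rw [rowsEuclidean_apply, hC0 i hi, WithLp.toLp_zero]),
      inner_rowsEuclidean, inner_rowsEuclidean, hGW]
    linarith [hGle Wb]
  have hmass := sum_sdiff_norm_rowsEuclidean_sq_le W
    (fun i hi j hj => (hCmax i hi j hj).elim le_of_lt fun h => h.1.le) hS (hCs' ▸ hss')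
  rw [hCs', ← sq_sqrt (by positivity : (0 : ℝ) ≤ s / s')] at hmass
  have hB := sum_inner_le_of_sum_norm_sq_le disjoint_sdiff_sdiff
    (fun i hi => hGS' i (Finset.mem_sdiff.1 hi).2) (sqrt_nonneg _) hmass
  rw [norm_rowsEuclidean, norm_rowsEuclidean, hGV, inner_rowsEuclidean, hGW] at hB
  rw [← mul_pow]
  exact le_mul_min_of_le_mul_sub (nucNorm_nonneg _)
    (hGW ▸ hGV ▸ trace_transpose_mul_le_frob_mul_frob G W) (sqrt_nonneg _)
    (by linarith [nucNorm_nonneg (Vᵀ * Wb)]) (hloss.trans hB)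

/-- nuclear-norm loss of the hard thresholding step. -/
theorem statement16
    (p r s s' : ℕ) (hss' : s ≤ s') (hs'p : s' ≤ p)
    (V W Wb : Matrix (Fin p) (Fin r) ℝ)
    (hVs : (rowSupport V).ncard ≤ s) (hV0 : V ≠ 0) (hW0 : W ≠ 0)
    (hWb : IsHT W s' Wb) :
    nucNorm (Vᵀ * W) - nucNorm (Vᵀ * Wb) ≤
      Real.sqrt ((s : ℝ) / s') *
        min (Real.sqrt (frob V ^ 2 * frob W ^ 2 - nucNorm (Vᵀ * W) ^ 2))
          ((1 + Real.sqrt ((s : ℝ) / s')) / (frob V * frob W) *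
            (frob V ^ 2 * frob W ^ 2 - nucNorm (Vᵀ * W) ^ 2)) :=
  statement16_general p r s s' hss' hs'p V W Wb hVs hWb

end
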